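/- Let X be a real or complex Banach space which is quasi-reflexive of order 1. Then its dual space X*, with the dual norm, is also quasi-reflexive of order 1. -/

import Mathlib

/-- A (semi)normed space `E` over `𝕜` is quasi-reflexive of order `1` if the canonical
embedding of `E` into its bidual has range of codimension `1`, i.e. the quotient of the
bidual by this range is one-dimensional. -/
def IsQuasiReflexiveOfOrderOne (𝕜 : Type*) (E : Type*) [NontriviallyNormedField 𝕜]
    [SeminormedAddCommGroup E] [NormedSpace 𝕜 E] : Prop :=
  Module.finrank 𝕜
    (@HasQuotient.Quotient _ _ (@Submodule.hasQuotient 𝕜 _ _ ContinuousLinearMap.addCommGroup _)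
      (LinearMap.range (NormedSpace.inclusionInDoubleDual 𝕜 E).toLinearMap)) = 1

/-!
Write `ι : X → X**` and `J : X* → X***` for the canonical embeddings. Restriction along `ι`,
i.e. the adjoint `ι' : X*** → X*`, is a left inverse of `J`, so `X*** = J(X*) ⊕ ker ι'`. The
kernel of `ι'` is the annihilator of `ι(X)`, which is the dual of `X** / ι(X)`; this quotient is
one-dimensional and Hausdorff (`ι` is an isometry and `X` is complete, so `ι(X)` is closed), so
its continuous and algebraic duals coincide and are one-dimensional.
-/

open Module NormedSpace

theorem LinearMap.isCompl_range_ker_of_comp_eq_id {R M N : Type*} [Ring R] [AddCommGroup M]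
    [Module R M] [AddCommGroup N] [Module R N] {f : M →ₗ[R] N} {g : N →ₗ[R] M}
    (hfg : f ∘ₗ g = LinearMap.id) : IsCompl (range g) (ker f) := by
  have hidem : IsIdempotentElem (g ∘ₗ f) := by
    rw [IsIdempotentElem, Module.End.mul_eq_comp, LinearMap.comp_assoc,
      ← LinearMap.comp_assoc f, hfg, LinearMap.id_comp]
  have hf : range f = ⊤ := range_eq_top_of_surjective f (surjective_of_comp_eq_id g f hfg)
  have hg : ker g = ⊥ := ker_eq_bot_of_injective (injective_of_comp_eq_id g f hfg)
  simpa only [range_comp_of_range_eq_top g hf, ker_comp_of_ker_eq_bot f hg] using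
    LinearMap.IsIdempotentElem.isCompl hidem

section Dual

variable {𝕜 : Type*} [NontriviallyNormedField 𝕜] {E F : Type*}
  [SeminormedAddCommGroup E] [NormedSpace 𝕜 E] [SeminormedAddCommGroup F] [NormedSpace 𝕜 F]

namespace ContinuousLinearMap

noncomputable def dualMap (T : E →L[𝕜] F) : StrongDual 𝕜 F →L[𝕜] StrongDual 𝕜 E :=
  precomp 𝕜 T

@[simp]
theorem dualMap_apply (T : E →L[𝕜] F) (φ : StrongDual 𝕜 F) : T.dualMap φ = φ.comp T :=
  rfl

noncomputable def strongDualQuotRangeEquivKerDualMap (T : E →L[𝕜] F) :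
    StrongDual 𝕜 (F ⧸ LinearMap.range T.toLinearMap) ≃ₗ[𝕜] LinearMap.ker T.dualMap.toLinearMap where
  toFun ψ := ⟨ψ.comp (LinearMap.range T.toLinearMap).mkQL, by
    ext x
    change ψ (Submodule.Quotient.mk (T x)) = 0
    exact (congrArg ψ ((Submodule.Quotient.mk_eq_zero _).2 ⟨x, rfl⟩)).trans (map_zero ψ)⟩
  invFun φ := (LinearMap.range T.toLinearMap).liftQL φ.1 (by
    rintro _ ⟨x, rfl⟩
    exact DFunLike.congr_fun (LinearMap.mem_ker.1 φ.2) x)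
  map_add' _ _ := rfl
  map_smul' _ _ := rfl
  left_inv ψ := by
    ext x
    induction x using Submodule.Quotient.induction_on
    rfl
  right_inv φ := by ext x; rfl

theorem finrank_ker_dualMap [CompleteSpace 𝕜] (T : E →L[𝕜] F)
    [IsClosed (LinearMap.range T.toLinearMap : Set F)]
    [FiniteDimensional 𝕜 (F ⧸ LinearMap.range T.toLinearMap)] :
    finrank 𝕜 (LinearMap.ker T.dualMap.toLinearMap) =
      finrank 𝕜 (F ⧸ LinearMap.range T.toLinearMap) := by
  rw [← (strongDualQuotRangeEquivKerDualMap T).finrank_eq,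
    ← LinearMap.toContinuousLinearMap.finrank_eq, Subspace.dual_finrank_eq]

end ContinuousLinearMap

namespace NormedSpace

theorem dualMap_inclusionInDoubleDual_comp_inclusionInDoubleDual :
    (inclusionInDoubleDual 𝕜 E).dualMap.toLinearMap ∘ₗ
      (inclusionInDoubleDual 𝕜 (StrongDual 𝕜 E)).toLinearMap = LinearMap.id :=
  LinearMap.ext fun _ => ContinuousLinearMap.ext fun _ => rfl

theorem isCompl_range_inclusionInDoubleDual_strongDual :
    IsCompl (LinearMap.range (inclusionInDoubleDual 𝕜 (StrongDual 𝕜 E)).toLinearMap)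
      (LinearMap.ker (inclusionInDoubleDual 𝕜 E).dualMap.toLinearMap) :=
  -- unification does not find the `AddCommGroup` instances underlying `toLinearMap` on its own
  @LinearMap.isCompl_range_ker_of_comp_eq_id 𝕜 _ _ _ ContinuousLinearMap.addCommGroup _
    ContinuousLinearMap.addCommGroup _ _ _ dualMap_inclusionInDoubleDual_comp_inclusionInDoubleDual

end NormedSpace

end Dual

theorem NormedSpace.isClosed_range_inclusionInDoubleDual (𝕜 E : Type*) [RCLike 𝕜]
    [NormedAddCommGroup E] [NormedSpace 𝕜 E] [CompleteSpace E] :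
    IsClosed (LinearMap.range (inclusionInDoubleDual 𝕜 E).toLinearMap :
      Set (StrongDual 𝕜 (StrongDual 𝕜 E))) := by
  have hι : Isometry (inclusionInDoubleDual 𝕜 E) := (inclusionInDoubleDualLi 𝕜).isometry
  rw [LinearMap.coe_range]
  exact hι.isClosedEmbedding.isClosed_range

/-- **Fact 6.2 of the paper.** If a (real or complex) Banach space `X` is
quasi-reflexive of order `1`, then so is its dual `X*`. -/
theorem dual_of_quasireflexive_is_quasireflexive
    (𝕜 : Type*) [RCLike 𝕜] (X : Type*) [NormedAddCommGroup X] [NormedSpace 𝕜 X]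
    [CompleteSpace X]
    (hX : IsQuasiReflexiveOfOrderOne 𝕜 X) :
    IsQuasiReflexiveOfOrderOne 𝕜 (StrongDual 𝕜 X) := by
  have := isClosed_range_inclusionInDoubleDual 𝕜 X
  have : FiniteDimensional 𝕜 _ := .of_finrank_pos (hX.symm ▸ one_pos)
  exact (Submodule.quotientEquivOfIsCompl _ _
    isCompl_range_inclusionInDoubleDual_strongDual).finrank_eq.trans
      ((ContinuousLinearMap.finrank_ker_dualMap _).trans hX)
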